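/- Let α > 0 and let Δ, q be positive integers with q ≥ (1+α)Δ + 1. Let G be a partially q-colored graph of maximum degree at most Δ, let v be a free vertex of G, let w ∈ [0,1] with Z_G(w) > 0, and let j ∈ {1,…,q} be a color that is free at v (no pinned neighbor of v is colored j). Then P_{G,w}[Φ(v)=j] ≥ 1/(e^{1/α}·q). -/

import Mathlib

attribute [local instance 10] Classical.propDecidable

noncomputable section

/-- A partially `q`-colored graph: a finite simple graph together with a set `S` of
pinned vertices and a pinning `pin` (only its values on `S` are relevant). -/
structure PCG (q : ℕ) where
  V : Type
  fin : Fintype V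
  G : SimpleGraph V
  S : Finset V
  pin : V → Fin q

namespace PCG

variable {q : ℕ}

instance (H : PCG q) : Fintype H.V := H.fin

/-- colorings agreeing with the pinning on the pinned set -/
def admissible (H : PCG q) (ψ : H.V → Fin q) : Prop :=
  ∀ u ∈ H.S, ψ u = H.pin u

/-- the number of monochromatic edges of a coloring -/
def mono (H : PCG q) (ψ : H.V → Fin q) : ℕ :=
  ((Finset.univ : Finset (Sym2 H.V)).filter
    (fun e => e ∈ H.G.edgeSet ∧ (e.map ψ).IsDiag)).card

/-- the (complex) Potts partition function of a partially colored graph -/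
def Z (H : PCG q) (w : ℂ) : ℂ :=
  ∑ ψ ∈ Finset.univ.filter (fun ψ : H.V → Fin q => H.admissible ψ), w ^ H.mono ψ

/-- the partition function restricted to colorings giving `v` the color `j` -/
def Zc (H : PCG q) (v : H.V) (j : Fin q) (w : ℂ) : ℂ :=
  ∑ ψ ∈ Finset.univ.filter
      (fun ψ : H.V → Fin q => H.admissible ψ ∧ ψ v = j), w ^ H.mono ψ

/-- the real Potts partition function -/
def Zr (H : PCG q) (w : ℝ) : ℝ :=
  ∑ ψ ∈ Finset.univ.filter (fun ψ : H.V → Fin q => H.admissible ψ), w ^ H.mono ψ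

/-- the real partition function restricted to colorings giving `v` the color `j` -/
def Zcr (H : PCG q) (v : H.V) (j : Fin q) (w : ℝ) : ℝ :=
  ∑ ψ ∈ Finset.univ.filter
      (fun ψ : H.V → Fin q => H.admissible ψ ∧ ψ v = j), w ^ H.mono ψ

/-- the marginal probability that `v` receives the color `j` -/
def Pr (H : PCG q) (v : H.V) (j : Fin q) (w : ℝ) : ℝ :=
  H.Zcr v j w / H.Zr w

/-- the neighborhood of a vertex -/
def nbhd (H : PCG q) (v : H.V) : Finset H.V :=
  Finset.univ.filter (fun u => H.G.Adj v u)

/-- the degree of a vertex -/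
def deg (H : PCG q) (v : H.V) : ℕ := (H.nbhd v).card

/-- the free degree of a vertex: its number of free neighbors -/
def freeDeg (H : PCG q) (v : H.V) : ℕ :=
  ((H.nbhd v).filter (fun u => u ∉ H.S)).card

/-- the number of pinned neighbors of `v` colored `j` -/
def cvec (H : PCG q) (v : H.V) (j : Fin q) : ℕ :=
  ((H.nbhd v).filter (fun u => u ∈ H.S ∧ H.pin u = j)).card

/-- the color `j` is blocked at `v`: some pinned neighbor of `v` is colored `j` -/
def blockedAt (H : PCG q) (v : H.V) (j : Fin q) : Prop :=
  ∃ u ∈ H.nbhd v, u ∈ H.S ∧ H.pin u = j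

/-- the set of colors that are free at `v` -/
def freeColors (H : PCG q) (v : H.V) : Finset (Fin q) :=
  Finset.univ.filter (fun j => ¬ H.blockedAt v j)

/-- the graph has maximum degree at most `Δ` -/
def maxDegLE (H : PCG q) (Δ : ℕ) : Prop := ∀ u, H.deg u ≤ Δ

/-- the class 𝒢•: `H` is connected, has max degree at most `Δ`, its pinned vertices
are leaves and form an independent set, and `v` is a free vertex -/
def GoodPair (Δ : ℕ) (H : PCG q) (v : H.V) : Prop :=
  H.G.Connected ∧ H.maxDegLE Δ ∧ (∀ u ∈ H.S, H.deg u = 1) ∧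
    (∀ u ∈ H.S, ∀ u' ∈ H.S, ¬ H.G.Adj u u') ∧ v ∉ H.S

/-- `Ḡ`: the graph obtained by deleting all pinned neighbors of `v` -/
def bar (H : PCG q) (v : H.V) : PCG q where
  V := ↥{u : H.V | ¬(u ∈ H.S ∧ H.G.Adj v u)}
  fin := inferInstance
  G := H.G.induce {u : H.V | ¬(u ∈ H.S ∧ H.G.Adj v u)}
  S := Finset.univ.filter (fun u => u.1 ∈ H.S)
  pin := fun u => H.pin u.1

/-- the vertex `v` viewed as a vertex of `Ḡ` -/
def barVert (H : PCG q) (v : H.V) : (H.bar v).V :=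
  ⟨v, fun h => H.G.loopless.irrefl v h.2⟩

/-- `G − v`: the graph obtained by deleting the vertex `v` -/
def deleteVert (H : PCG q) (v : H.V) : PCG q where
  V := ↥{u : H.V | u ≠ v}
  fin := inferInstance
  G := H.G.induce {u : H.V | u ≠ v}
  S := Finset.univ.filter (fun u => u.1 ∈ H.S)
  pin := fun u => H.pin u.1

/-- `G^{+ℓ}`: attach a new pinned leaf of color `ℓ` to the vertex `v` -/
def addLeaf (H : PCG q) (v : H.V) (ℓ : Fin q) : PCG q where
  V := Option H.V
  fin := inferInstance
  G := SimpleGraph.fromRel (fun a b =>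
    (∃ u u' : H.V, a = some u ∧ b = some u' ∧ H.G.Adj u u') ∨ (a = none ∧ b = some v))
  S := insert none (H.S.image some)
  pin := fun a => a.elim ℓ H.pin

/-- the complex log-ratio `R_{G,v;i,j}` -/
def logRatio (H : PCG q) (v : H.V) (i j : Fin q) (w : ℂ) : ℂ :=
  Complex.log (H.Zc v i w / H.Zc v j w)

/-- the vector `P_{G,v}(w) ∈ ℝ^{q−1}` of marginal differences -/
def Pvec (H : PCG q) (v : H.V) (w : ℝ) (j : Fin (q - 1)) : ℝ :=
  (H.addLeaf v ⟨0, by have := j.2; omega⟩).Pr (some v) (Fin.castLE (Nat.sub_le q 1) j) w -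
  (H.addLeaf v ⟨q - 1, by have := j.2; omega⟩).Pr (some v) (Fin.castLE (Nat.sub_le q 1) j) w

/-- the graph `Ĝ_i` of the telescoping procedure: delete `v` from `G`, attach to the
`j`-th neighbor of `v` (for `j ≠ i`) a pinned leaf colored `ℓ₂` if `j < i` and `ℓ₁`
if `j > i`, and attach a free leaf (the vertex `Sum.inr i`) to the `i`-th neighbor. -/
def telescope (H : PCG q) (v : H.V) {d : ℕ} (nbrs : Fin d → H.V)
    (ℓ₁ ℓ₂ : Fin q) (i : Fin d) : PCG q where
  V := ↥{u : H.V | u ≠ v} ⊕ Fin d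
  fin := inferInstance
  G := SimpleGraph.fromRel (fun a b =>
    (∃ u u' : ↥{u : H.V | u ≠ v}, a = Sum.inl u ∧ b = Sum.inl u' ∧ H.G.Adj u.1 u'.1) ∨
    (∃ (u : ↥{u : H.V | u ≠ v}) (j : Fin d), a = Sum.inl u ∧ b = Sum.inr j ∧ u.1 = nbrs j))
  S := (Finset.univ.filter (fun u : ↥{u : H.V | u ≠ v} => u.1 ∈ H.S)).image Sum.inl ∪
       (Finset.univ.filter (fun j : Fin d => j ≠ i)).image Sum.inr
  pin := Sum.elim (fun u => H.pin u.1) (fun j => if (j : ℕ) < (i : ℕ) then ℓ₂ else ℓ₁)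

end PCG

/-- extend a vector indexed by `Fin (q-1)` to `Fin q` by a zero last coordinate -/
def extendLast (q : ℕ) (x : Fin (q - 1) → ℂ) : Fin q → ℂ :=
  fun j => if h : (j : ℕ) < q - 1 then x ⟨j, h⟩ else 0

/-- the polynomial `P_c(w,x) = w^{c₁+1}e^{x₁} + Σ_{j=2}^{q−1} w^{c_j}e^{x_j} + w^{c_q}` -/
def Ppoly (q : ℕ) (c : Fin q → ℕ) (w : ℂ) (x : Fin (q - 1) → ℂ) : ℂ :=
  ∑ j : Fin q, w ^ (c j + if (j : ℕ) = 0 then 1 else 0) * Complex.exp (extendLast q x j)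

/-- the polynomial `Q_c(w,x) = w^{c₁}e^{x₁} + Σ_{j=2}^{q−1} w^{c_j}e^{x_j} + w^{c_q+1}` -/
def Qpoly (q : ℕ) (c : Fin q → ℕ) (w : ℂ) (x : Fin (q - 1) → ℂ) : ℂ :=
  ∑ j : Fin q, w ^ (c j + if (j : ℕ) = q - 1 then 1 else 0) * Complex.exp (extendLast q x j)

/-- the map `F_{w,c}(x) = Log (P_c(w,x)/Q_c(w,x))` -/
def Fmap (q : ℕ) (c : Fin q → ℕ) (w : ℂ) (x : Fin (q - 1) → ℂ) : ℂ :=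
  Complex.log (Ppoly q c w x / Qpoly q c w x)

/-- real version of `extendLast` -/
def extendLastR (q : ℕ) (x : Fin (q - 1) → ℝ) : Fin q → ℝ :=
  fun j => if h : (j : ℕ) < q - 1 then x ⟨j, h⟩ else 0

/-- real version of `Ppoly` -/
def PpolyR (q : ℕ) (c : Fin q → ℕ) (w : ℝ) (x : Fin (q - 1) → ℝ) : ℝ :=
  ∑ j : Fin q, w ^ (c j + if (j : ℕ) = 0 then 1 else 0) * Real.exp (extendLastR q x j)

/-- real version of `Qpoly` -/
def QpolyR (q : ℕ) (c : Fin q → ℕ) (w : ℝ) (x : Fin (q - 1) → ℝ) : ℝ :=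
  ∑ j : Fin q, w ^ (c j + if (j : ℕ) = q - 1 then 1 else 0) * Real.exp (extendLastR q x j)

/-- real version of `Fmap`, i.e. `F_{w,c}` viewed as a real function on `ℝ^{q−1}` -/
def FmapR (q : ℕ) (c : Fin q → ℕ) (w : ℝ) (x : Fin (q - 1) → ℝ) : ℝ :=
  Real.log (PpolyR q c w x / QpolyR q c w x)

/-!
Recolouring a free vertex `u` gives `(q - deg u) Z^j_u ≤ Z`: in each colouring with `ψ u = j` at
least `q - deg u` colours appear at no neighbour of `u`, and moving `u` to such a colour creates no
monochromatic edge at `u`. Now pin the free neighbours of `v` one at a time: splitting `Z` by the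
colour `c` of a free neighbour `u`, the part `c = j` is `Z^j_u ≤ Z/(q - Δ)`, and every pinning
`c ≠ j` keeps `j` free at `v`. Once all neighbours of `v` are pinned, moving `v` to `j` creates no
monochromatic edge, so `Z ≤ q Z^j_v`. Hence `q P[Φ(v) = j] ≥ (1 - 1/(q - Δ))^Δ ≥ e^{-1/α}`, the last
step because `q - Δ - 1 ≥ αΔ`.
-/

open Finset

theorem Real.exp_neg_inv_le_one_sub_inv_pow {α m : ℝ} (hα : 0 < α) {n : ℕ}
    (hn : α * n ≤ m - 1) : Real.exp (-(1 / α)) ≤ (1 - 1 / m) ^ n := by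
  rcases Nat.eq_zero_or_pos n with rfl | hn0
  · rw [pow_zero, Real.exp_le_one_iff, neg_nonpos]
    positivity
  have hm : 0 < m - 1 := lt_of_lt_of_le (by positivity) hn
  have hbase : Real.exp (-(1 / (m - 1))) ≤ 1 - 1 / m := by
    have hm0 : m ≠ 0 := by linarith
    rw [Real.exp_neg, show 1 - 1 / m = (1 + 1 / (m - 1))⁻¹ by field_simp [hm.ne']; ring]
    exact inv_anti₀ (by positivity) (by linarith [Real.add_one_le_exp (1 / (m - 1))])
  calc Real.exp (-(1 / α)) ≤ Real.exp (-(1 / (m - 1))) ^ n := by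
        rw [← Real.exp_nat_mul, Real.exp_le_exp, mul_neg, neg_le_neg_iff, ← div_eq_mul_one_div,
          div_le_div_iff₀ hm hα]
        linarith
    _ ≤ (1 - 1 / m) ^ n := pow_le_pow_left₀ (Real.exp_pos _).le hbase n

namespace PCG

variable {q : ℕ} (H : PCG q)

def nbrCount (u : H.V) (ψ : H.V → Fin q) (k : Fin q) : ℕ :=
  ((H.nbhd u).filter (fun x => ψ x = k)).card

def monoAway (u : H.V) (ψ : H.V → Fin q) : ℕ :=
  (univ.filter (fun e : Sym2 H.V => (e ∈ H.G.edgeSet ∧ (e.map ψ).IsDiag) ∧ u ∉ e)).card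

lemma card_mono_mem_eq_nbrCount (u : H.V) (ψ : H.V → Fin q) :
    (univ.filter (fun e : Sym2 H.V => (e ∈ H.G.edgeSet ∧ (e.map ψ).IsDiag) ∧ u ∈ e)).card
      = H.nbrCount u ψ (ψ u) := by
  refine card_bij' (i := fun e he => Sym2.Mem.other (mem_filter.mp he).2.2)
    (j := fun x _ => s(u, x)) ?_ ?_ (fun e _ => Sym2.other_spec _)
    (fun x _ => Sym2.congr_right.mp (Sym2.other_spec (Sym2.mem_mk_left u x)))
  · intro e he
    obtain ⟨-, ⟨hE, hd⟩, hu⟩ := mem_filter.mp he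
    have hsp := Sym2.other_spec hu
    simp only [nbhd, mem_filter, mem_univ, true_and]
    rw [← hsp, Sym2.map_mk, Sym2.mk_isDiag_iff] at hd
    exact ⟨by rwa [← SimpleGraph.mem_edgeSet, hsp], hd.symm⟩
  · intro x hx
    simp only [nbhd, mem_filter, mem_univ, true_and] at hx
    simp only [mem_filter, mem_univ, true_and, SimpleGraph.mem_edgeSet, Sym2.map_mk,
      Sym2.mk_isDiag_iff, Sym2.mem_mk_left, and_true]
    exact ⟨hx.1, hx.2.symm⟩

lemma mono_eq_monoAway_add_nbrCount (u : H.V) (ψ : H.V → Fin q) :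
    H.mono ψ = H.monoAway u ψ + H.nbrCount u ψ (ψ u) := by
  rw [mono, monoAway, ← card_mono_mem_eq_nbrCount, add_comm,
    ← card_filter_add_card_filter_not (p := fun e => u ∈ e), filter_filter, filter_filter]

lemma monoAway_update (u : H.V) (ψ : H.V → Fin q) (k : Fin q) :
    H.monoAway u (Function.update ψ u k) = H.monoAway u ψ := by
  refine congrArg card (filter_congr fun e _ => ?_)
  induction e using Sym2.ind with
  | _ a b =>
    by_cases hu : u ∈ s(a, b)
    · simp [hu]
    · simp only [Sym2.mem_iff, not_or] at hu
      simp [Function.update_of_ne (Ne.symm hu.1),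
        Function.update_of_ne (Ne.symm hu.2), hu]

lemma nbrCount_update (u : H.V) (ψ : H.V → Fin q) (k c : Fin q) :
    H.nbrCount u (Function.update ψ u k) c = H.nbrCount u ψ c := by
  refine congrArg card (filter_congr fun x hx => ?_)
  rw [Function.update_of_ne (mem_filter.mp hx).2.ne']

lemma mono_update (u : H.V) (ψ : H.V → Fin q) (k : Fin q) :
    H.mono (Function.update ψ u k) = H.monoAway u ψ + H.nbrCount u ψ k := by
  rw [mono_eq_monoAway_add_nbrCount _ u, monoAway_update, Function.update_self, nbrCount_update]

lemma sum_nbrCount (u : H.V) (ψ : H.V → Fin q) : ∑ c, H.nbrCount u ψ c = H.deg u :=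
  (card_eq_sum_card_fiberwise fun _ _ => mem_univ _).symm

lemma admissible_update_iff {u : H.V} (hu : u ∉ H.S) (ψ : H.V → Fin q) (k : Fin q) :
    H.admissible (Function.update ψ u k) ↔ H.admissible ψ := by
  refine forall₂_congr fun x hx => ?_
  rw [Function.update_of_ne (ne_of_mem_of_not_mem hx hu)]

lemma sub_deg_le_sum_pow_nbrCount (u : H.V) (ψ : H.V → Fin q) {w : ℝ} (hw : 0 ≤ w) :
    (q : ℝ) - H.deg u ≤ ∑ c, w ^ H.nbrCount u ψ c := by
  have hterm : ∀ n : ℕ, 1 - (n : ℝ) ≤ w ^ n := by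
    rintro (_ | n)
    · simp
    · push_cast; linarith [pow_nonneg hw (n + 1)]
  calc (q : ℝ) - H.deg u = ∑ c, (1 - (H.nbrCount u ψ c : ℝ)) := by
        rw [sum_sub_distrib, ← Nat.cast_sum, sum_nbrCount]; simp
    _ ≤ ∑ c, w ^ H.nbrCount u ψ c := sum_le_sum fun c _ => hterm _

lemma sum_filter_apply_eq_sum_update {β : Type*} [AddCommMonoid β] (u : H.V) (hu : u ∉ H.S)
    (j c : Fin q) (f : (H.V → Fin q) → β) :
    ∑ ψ ∈ univ.filter (fun ψ => H.admissible ψ ∧ ψ u = c), f ψ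
      = ∑ ψ ∈ univ.filter (fun ψ => H.admissible ψ ∧ ψ u = j), f (Function.update ψ u c) := by
  have hback : ∀ k, ∀ ψ ∈ univ.filter (fun ψ => H.admissible ψ ∧ ψ u = k),
      ∀ l, Function.update (Function.update ψ u l) u k = ψ := by
    intro k ψ hψ l
    rw [Function.update_idem, ← (mem_filter.mp hψ).2.2, Function.update_eq_self]
  have hmem : ∀ ψ, H.admissible ψ → ∀ k,
      Function.update ψ u k ∈ univ.filter (fun ψ => H.admissible ψ ∧ ψ u = k) := fun ψ hψ k =>
    mem_filter.mpr ⟨mem_univ _, (H.admissible_update_iff hu ψ k).mpr hψ, Function.update_self ..⟩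
  refine sum_nbij' (fun ψ => Function.update ψ u j) (fun ψ => Function.update ψ u c)
    (fun ψ hψ => hmem ψ (mem_filter.mp hψ).2.1 j) (fun ψ hψ => hmem ψ (mem_filter.mp hψ).2.1 c)
    (fun ψ hψ => hback c ψ hψ j) (fun ψ hψ => hback j ψ hψ c) fun ψ hψ => ?_
  rw [hback c ψ hψ j]

lemma Zr_eq_sum_sum_update (u : H.V) (hu : u ∉ H.S) (j : Fin q) (w : ℝ) :
    H.Zr w = ∑ ψ ∈ univ.filter (fun ψ => H.admissible ψ ∧ ψ u = j),
      ∑ c, w ^ H.mono (Function.update ψ u c) := by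
  rw [sum_comm, Zr, ← sum_fiberwise (g := fun ψ : H.V → Fin q => ψ u)]
  refine sum_congr rfl fun c _ => ?_
  rw [filter_filter, H.sum_filter_apply_eq_sum_update u hu j c]

lemma Zr_eq_sum_Zcr (u : H.V) (w : ℝ) : H.Zr w = ∑ c, H.Zcr u c w := by
  rw [Zr, ← sum_fiberwise (g := fun ψ : H.V → Fin q => ψ u)]
  simp only [filter_filter, Zcr]

lemma mul_Zcr_le_Zr {u : H.V} (hu : u ∉ H.S) (j : Fin q) {w : ℝ} (hw0 : 0 ≤ w) (hw1 : w ≤ 1) :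
    ((q : ℝ) - H.deg u) * H.Zcr u j w ≤ H.Zr w := by
  rw [H.Zr_eq_sum_sum_update u hu j w, Zcr, mul_sum]
  refine sum_le_sum fun ψ hψ => ?_
  have hsum : ∑ c, w ^ H.mono (Function.update ψ u c)
      = w ^ H.monoAway u ψ * ∑ c, w ^ H.nbrCount u ψ c := by
    simp only [mono_update, pow_add, mul_sum]
  rw [hsum, H.mono_eq_monoAway_add_nbrCount u, pow_add, (mem_filter.mp hψ).2.2]
  rcases le_total ((q : ℝ) - H.deg u) 0 with hneg | hpos
  · exact (mul_nonpos_of_nonpos_of_nonneg hneg (by positivity)).trans (by positivity)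
  calc ((q : ℝ) - H.deg u) * (w ^ H.monoAway u ψ * w ^ H.nbrCount u ψ j)
      ≤ ((q : ℝ) - H.deg u) * w ^ H.monoAway u ψ :=
        mul_le_mul_of_nonneg_left (mul_le_of_le_one_right (by positivity) (pow_le_one₀ hw0 hw1))
          hpos
    _ ≤ w ^ H.monoAway u ψ * ∑ c, w ^ H.nbrCount u ψ c := by
        rw [mul_comm]
        exact mul_le_mul_of_nonneg_left (H.sub_deg_le_sum_pow_nbrCount u ψ hw0) (by positivity)

lemma nbrCount_eq_zero_of_freeDeg_eq_zero {v : H.V} {j : Fin q} (hj : ¬ H.blockedAt v j)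
    (hfd : H.freeDeg v = 0) {ψ : H.V → Fin q} (hψ : H.admissible ψ) : H.nbrCount v ψ j = 0 := by
  refine card_eq_zero.mpr (filter_eq_empty_iff.mpr fun x hx hxj => hj ⟨x, hx, ?_⟩)
  have hxS : x ∈ H.S := by
    by_contra hxS
    exact (filter_eq_empty_iff.mp (card_eq_zero.mp hfd)) hx hxS
  exact ⟨hxS, hψ x hxS ▸ hxj⟩

lemma Zr_le_mul_Zcr_of_freeDeg_eq_zero {v : H.V} (hv : v ∉ H.S) {j : Fin q}
    (hj : ¬ H.blockedAt v j) (hfd : H.freeDeg v = 0) {w : ℝ} (hw0 : 0 ≤ w) (hw1 : w ≤ 1) :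
    H.Zr w ≤ q * H.Zcr v j w := by
  rw [H.Zr_eq_sum_sum_update v hv j w, Zcr, mul_sum]
  refine sum_le_sum fun ψ hψ => ?_
  obtain ⟨hadm, hψv⟩ := (mem_filter.mp hψ).2
  have hmono : H.mono ψ = H.monoAway v ψ := by
    rw [H.mono_eq_monoAway_add_nbrCount v, hψv,
      H.nbrCount_eq_zero_of_freeDeg_eq_zero hj hfd hadm, add_zero]
  calc ∑ c, w ^ H.mono (Function.update ψ v c) ≤ ∑ _c : Fin q, w ^ H.mono ψ :=
        sum_le_sum fun c _ => by
          rw [mono_update, hmono]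
          exact pow_le_pow_of_le_one hw0 hw1 (Nat.le_add_right _ _)
    _ = q * w ^ H.mono ψ := by simp

abbrev pinVertex (u : H.V) (c : Fin q) : PCG q where
  V := H.V
  fin := H.fin
  G := H.G
  S := insert u H.S
  pin := Function.update H.pin u c

lemma admissible_pinVertex_iff {u : H.V} (hu : u ∉ H.S) (c : Fin q) (ψ : H.V → Fin q) :
    (H.pinVertex u c).admissible ψ ↔ H.admissible ψ ∧ ψ u = c := by
  simp only [admissible, mem_insert, forall_eq_or_imp, Function.update_self]
  rw [and_comm]
  refine and_congr_left' (forall₂_congr fun x hx => ?_)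
  rw [Function.update_of_ne (ne_of_mem_of_not_mem hx hu)]

lemma Zr_pinVertex {u : H.V} (hu : u ∉ H.S) (c : Fin q) (w : ℝ) :
    (H.pinVertex u c).Zr w = H.Zcr u c w :=
  sum_congr (filter_congr fun ψ _ => H.admissible_pinVertex_iff hu c ψ) fun _ _ => rfl

lemma Zcr_eq_sum_Zcr_pinVertex {u : H.V} (hu : u ∉ H.S) (v : H.V) (j : Fin q) (w : ℝ) :
    H.Zcr v j w = ∑ c, (H.pinVertex u c).Zcr v j w := by
  rw [Zcr, ← sum_fiberwise (g := fun ψ : H.V → Fin q => ψ u)]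
  refine sum_congr rfl fun c _ => ?_
  rw [filter_filter]
  refine sum_congr (filter_congr fun ψ _ => ?_) fun _ _ => rfl
  rw [H.admissible_pinVertex_iff hu, and_right_comm]

lemma freeDeg_pinVertex {u v : H.V} (huv : u ∈ H.nbhd v) (hu : u ∉ H.S) (c : Fin q) :
    (H.pinVertex u c).freeDeg v = H.freeDeg v - 1 := by
  rw [freeDeg, freeDeg, ← card_erase_of_mem (mem_filter.mpr ⟨huv, hu⟩)]
  congr 1
  ext x
  simp only [pinVertex, nbhd, mem_filter, mem_erase, mem_insert, not_or]
  tauto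

lemma not_blockedAt_pinVertex {u v : H.V} (hu : u ∉ H.S) {c j : Fin q} (hcj : c ≠ j)
    (hj : ¬ H.blockedAt v j) : ¬ (H.pinVertex u c).blockedAt v j := by
  rintro ⟨x, hx, hxS, hpin⟩
  rcases mem_insert.mp hxS with hxu | hxS
  · exact hcj (by simpa [hxu] using hpin)
  · change Function.update H.pin u c x = j at hpin
    rw [Function.update_of_ne (ne_of_mem_of_not_mem hxS hu)] at hpin
    exact hj ⟨x, hx, hxS, hpin⟩

lemma freeDeg_le_deg (v : H.V) : H.freeDeg v ≤ H.deg v := card_filter_le _ _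

lemma Zcr_nonneg (v : H.V) (j : Fin q) {w : ℝ} (hw : 0 ≤ w) : 0 ≤ H.Zcr v j w :=
  sum_nonneg fun _ _ => pow_nonneg hw _

lemma one_sub_inv_mul_Zr_le_sum_Zr_pinVertex {Δ : ℕ} (hΔq : Δ < q) (hmax : H.maxDegLE Δ)
    {u : H.V} (hu : u ∉ H.S) (j : Fin q) {w : ℝ} (hw0 : 0 ≤ w) (hw1 : w ≤ 1) :
    (1 - 1 / ((q : ℝ) - Δ)) * H.Zr w ≤ ∑ c ∈ univ.erase j, (H.pinVertex u c).Zr w := by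
  have hm : (0 : ℝ) < q - Δ := sub_pos.mpr (by exact_mod_cast hΔq)
  have hdeg : (H.deg u : ℝ) ≤ Δ := by exact_mod_cast hmax u
  have hZcr : ((q : ℝ) - Δ) * H.Zcr u j w ≤ H.Zr w :=
    (mul_le_mul_of_nonneg_right (by linarith) (H.Zcr_nonneg u j hw0)).trans
      (H.mul_Zcr_le_Zr hu j hw0 hw1)
  rw [sum_congr rfl fun c _ => H.Zr_pinVertex hu c w, sum_erase_eq_sub (mem_univ j),
    ← Zr_eq_sum_Zcr, sub_mul, one_mul, one_div_mul_eq_div]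
  linarith [(le_div_iff₀' hm).mpr hZcr]

theorem pow_freeDeg_mul_Zr_le_mul_Zcr {Δ : ℕ} (hΔq : Δ < q) (hmax : H.maxDegLE Δ) {v : H.V}
    (hv : v ∉ H.S) {j : Fin q} (hj : ¬ H.blockedAt v j) {w : ℝ} (hw0 : 0 ≤ w) (hw1 : w ≤ 1) :
    (1 - 1 / ((q : ℝ) - Δ)) ^ H.freeDeg v * H.Zr w ≤ q * H.Zcr v j w := by
  set θ : ℝ := 1 - 1 / ((q : ℝ) - Δ)
  have hθ : 0 ≤ θ := by
    have : (1 : ℝ) ≤ q - Δ := by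
      rw [le_sub_iff_add_le']; exact_mod_cast Nat.add_one_le_iff.mpr hΔq
    exact sub_nonneg.mpr ((div_le_one (by linarith)).mpr this)
  obtain ⟨n, hn⟩ : ∃ n, H.freeDeg v = n := ⟨_, rfl⟩
  rw [hn]
  induction n generalizing H with
  | zero => simpa using H.Zr_le_mul_Zcr_of_freeDeg_eq_zero hv hj hn hw0 hw1
  | succ n ih =>
    obtain ⟨u, hu⟩ := card_pos.mp (hn ▸ n.succ_pos : 0 < H.freeDeg v)
    obtain ⟨huv, huS⟩ := mem_filter.mp hu
    have hvu : v ≠ u := (mem_filter.mp huv).2.ne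
    have hpinned : ∀ c ∈ univ.erase j,
        θ ^ n * (H.pinVertex u c).Zr w ≤ q * (H.pinVertex u c).Zcr v j w := fun c hc =>
      ih (H.pinVertex u c) hmax (by simp [hv, hvu])
        (H.not_blockedAt_pinVertex huS (ne_of_mem_erase hc) hj)
        (by rw [H.freeDeg_pinVertex huv huS, hn, Nat.add_sub_cancel])
    calc θ ^ (n + 1) * H.Zr w = θ ^ n * (θ * H.Zr w) := by ring
      _ ≤ θ ^ n * ∑ c ∈ univ.erase j, (H.pinVertex u c).Zr w :=
        mul_le_mul_of_nonneg_left
          (H.one_sub_inv_mul_Zr_le_sum_Zr_pinVertex hΔq hmax huS j hw0 hw1) (by positivity)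
      _ ≤ ∑ c ∈ univ.erase j, q * (H.pinVertex u c).Zcr v j w := by
        rw [mul_sum]; exact sum_le_sum hpinned
      _ ≤ ∑ c, q * (H.pinVertex u c).Zcr v j w :=
        sum_le_sum_of_subset_of_nonneg (erase_subset j univ) fun c _ _ =>
          mul_nonneg (Nat.cast_nonneg q) ((H.pinVertex u c).Zcr_nonneg v j hw0)
      _ = q * H.Zcr v j w := by rw [← mul_sum, ← H.Zcr_eq_sum_Zcr_pinVertex huS]

end PCG

theorem prob_basic_lower_general (α : ℝ) (hα : 0 < α) (Δ q : ℕ)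
    (hqΔ : (1 + α) * (Δ : ℝ) + 1 ≤ (q : ℝ))
    (H : PCG q) (hmax : H.maxDegLE Δ) (v : H.V) (hv : v ∉ H.S)
    (w : ℝ) (hw : w ∈ Set.Icc (0 : ℝ) 1) (hZ : 0 < H.Zr w)
    (j : Fin q) (hfree : ¬ H.blockedAt v j) :
    1 / (Real.exp (1 / α) * (q : ℝ)) ≤ H.Pr v j w := by
  obtain ⟨hw0, hw1⟩ := hw
  have hαΔ : α * Δ ≤ ((q : ℝ) - Δ) - 1 := by linarith
  have hm : (1 : ℝ) ≤ q - Δ := by nlinarith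
  have hΔq : Δ < q := by exact_mod_cast (by linarith : (Δ : ℝ) < q)
  have hq : (0 : ℝ) < q := by exact_mod_cast Nat.zero_lt_of_lt hΔq
  have hθ : Real.exp (-(1 / α)) ≤ (1 - 1 / ((q : ℝ) - Δ)) ^ H.freeDeg v :=
    (Real.exp_neg_inv_le_one_sub_inv_pow hα hαΔ).trans <|
      pow_le_pow_of_le_one (sub_nonneg.mpr ((div_le_one (by linarith)).mpr hm))
        (sub_le_self _ (by positivity)) ((H.freeDeg_le_deg v).trans (hmax v))
  have hkey := H.pow_freeDeg_mul_Zr_le_mul_Zcr hΔq hmax hv hfree hw0 hw1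
  rw [PCG.Pr, le_div_iff₀ hZ]
  calc 1 / (Real.exp (1 / α) * q) * H.Zr w = Real.exp (-(1 / α)) * H.Zr w / q := by
        rw [Real.exp_neg]; field_simp
    _ ≤ (1 - 1 / ((q : ℝ) - Δ)) ^ H.freeDeg v * H.Zr w / q := by gcongr
    _ ≤ H.Zcr v j w := by rw [div_le_iff₀ hq]; linarith

/-- Basic lower bound on the marginal probability of a free color at the root vertex. -/
theorem prob_basic_lower (α : ℝ) (hα : 0 < α) (Δ q : ℕ) (hΔ : 0 < Δ) (hq : 0 < q)
    (hqΔ : (1 + α) * (Δ : ℝ) + 1 ≤ (q : ℝ))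
    (H : PCG q) (hmax : H.maxDegLE Δ) (v : H.V) (hv : v ∉ H.S)
    (w : ℝ) (hw : w ∈ Set.Icc (0 : ℝ) 1) (hZ : 0 < H.Zr w)
    (j : Fin q) (hfree : ¬ H.blockedAt v j) :
    1 / (Real.exp (1 / α) * (q : ℝ)) ≤ H.Pr v j w :=
  prob_basic_lower_general α hα Δ q hqΔ H hmax v hv w hw hZ j hfree
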